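/- arXiv:2205.02636 — 4 statements merged into one kernel-verified Lean document; each statement's English description precedes it below -/
import Mathlib

section
/- For any n > 0 and any positive integer p, 2^p · (n/p)^p ≤ e^(2n/e). -/
/-! The function `t ↦ (x / t) ^ t` is maximal at `t = x / e`, where it equals `exp (x / e)`.
Pointwise this is `y ≤ exp (y / e)`, the tangent line bound `u + 1 ≤ exp u` at `u = y / e - 1`;
raising it to the `p`-th power at `y = 2 n / p` gives the theorem. -/

open Real

theorem le_exp_div_exp_one (y : ℝ) : y ≤ exp (y / exp 1) := by
  have h := add_one_le_exp (y / exp 1 - 1)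
  rw [exp_sub, le_div_iff₀ (exp_pos 1), sub_add_cancel, div_mul_cancel₀ _ (exp_pos 1).ne'] at h
  exact h

theorem div_pow_le_exp_div_exp_one {x : ℝ} (hx : 0 ≤ x) (p : ℕ) :
    (x / p) ^ p ≤ exp (x / exp 1) := by
  rcases p.eq_zero_or_pos with rfl | hp
  · simpa using one_le_exp (by positivity : 0 ≤ x / exp 1)
  calc (x / p) ^ p ≤ exp (x / p / exp 1) ^ p := by
        gcongr
        exact le_exp_div_exp_one _
    _ = exp (x / exp 1) := by
        rw [← exp_nat_mul]
        field_simp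

theorem two_pow_mul_div_pow_le_general (n : ℝ) (hn : 0 < n) (p : ℕ) :
    (2 : ℝ) ^ p * (n / p) ^ p ≤ Real.exp (2 * n / Real.exp 1) := by
  rw [← mul_pow, ← mul_div_assoc]
  exact div_pow_le_exp_div_exp_one (by positivity) p

/-- For any real `n > 0` and any positive integer `p`,
`2^p * (n/p)^p ≤ e^(2n/e)`. -/
theorem two_pow_mul_div_pow_le (n : ℝ) (hn : 0 < n) (p : ℕ) (hp : 0 < p) :
    (2 : ℝ) ^ p * (n / p) ^ p ≤ Real.exp (2 * n / Real.exp 1) :=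
  two_pow_mul_div_pow_le_general n hn p
end

section
/- Let G be a finite directed graph with initial vertex r from which all vertices are reachable. Define a loop node to be a vertex with more than one incoming edge, or the vertex r if it has at least one incoming edge. Construct G' by adding, for each loop node n, a fresh vertex X_n, and redirecting every edge of G with target a loop node n to target X_n instead. Then G' is acyclic. -/
/-- A vertex is a loop node if it has more than one incoming edge, or it is the
initial vertex `r` and has at least one incoming edge. -/
def IsLoopNode {V : Type*} (adj : V → V → Prop) (r : V) (n : V) : Prop :=
  1 < {u | adj u n}.ncard ∨ (n = r ∧ ∃ u, adj u n)

/-- The DAG-ification of `G`: vertices are `Sum.inl v` for old vertices and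
`Sum.inr n` for the fresh vertex `X_n` associated to a loop node `n`; every
edge whose target is a loop node is redirected to the fresh copy. -/
def DagAdj {V : Type*} (adj : V → V → Prop) (r : V) :
    V ⊕ V → V ⊕ V → Prop
  | Sum.inl u, Sum.inl v => adj u v ∧ ¬ IsLoopNode adj r v
  | Sum.inl u, Sum.inr v => adj u v ∧ IsLoopNode adj r v
  | Sum.inr _, _ => False

/-- The DAG-ification of a finite graph whose vertices are all reachable from
`r` is acyclic. -/
theorem dagification_acyclic {V : Type*} [Finite V]
    (adj : V → V → Prop) (r : V)
    (hreach : ∀ v, Relation.ReflTransGen adj r v) :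
    ∀ x : V ⊕ V, ¬ Relation.TransGen (DagAdj adj r) x x := by
  classical
  set adj' : V → V → Prop := fun u w => adj u w ∧ ¬ IsLoopNode adj r w with hadj'
  -- project cycles in G' to cycles in (adj')
  have proj : ∀ x y : V ⊕ V, Relation.TransGen (DagAdj adj r) x y →
      ∀ u w, x = Sum.inl u → y = Sum.inl w → Relation.TransGen adj' u w := by
    intro x y h
    induction h with
    | single h' =>
      intro u w hx hy
      subst hx; subst hy
      exact Relation.TransGen.single h'
    | @tail b c hab hbc ih =>
      intro u w hx hy
      subst hx; subst hy
      cases b with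
      | inl m => exact (ih u m rfl rfl).tail hbc
      | inr m => exact absurd hbc (by simp [DagAdj])
  -- every vertex on a cycle has a unique in-neighbor, also on a cycle
  have key : ∀ w : V, Relation.TransGen adj' w w →
      ∃ u, adj' u w ∧ Relation.TransGen adj' u u ∧ ∀ u', adj u' w → u' = u := by
    intro w hw
    obtain ⟨b, hwb, hbw⟩ := Relation.TransGen.tail'_iff.mp hw
    have hPb : Relation.TransGen adj' b b := Relation.TransGen.head' hbw hwb
    have hnl : ¬ IsLoopNode adj r w := hbw.2
    have hfin : {u | adj u w}.Finite := Set.toFinite _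
    have hle : {u | adj u w}.ncard ≤ 1 := by
      by_contra h
      exact hnl (Or.inl (lt_of_not_ge h))
    refine ⟨b, hbw, hPb, fun u' hu' => ?_⟩
    exact (Set.ncard_le_one_iff hfin).mp hle hu' hbw.1
  -- no vertex reachable from r lies on a cycle
  have main : ∀ w : V, Relation.ReflTransGen adj r w →
      ¬ Relation.TransGen adj' w w := by
    intro w hw
    induction hw with
    | refl =>
      intro hc
      obtain ⟨u, hu, _, _⟩ := key r hc
      exact hu.2 (Or.inr ⟨rfl, ⟨u, hu.1⟩⟩)
    | @tail b c hab hbc ih =>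
      intro hc
      obtain ⟨u, hu, hPu, huniq⟩ := key c hc
      have := huniq b hbc
      subst this
      exact ih hPu
  intro x hx
  cases x with
  | inl v => exact main v (hreach v) (proj _ _ hx v v rfl rfl)
  | inr v =>
    obtain ⟨b, hb, _⟩ := Relation.TransGen.head'_iff.mp hx
    exact hb.elim
end

section
/- Let → be a deterministic labelled transition system in the sense that for every state s and label λ there is at most one state s' with s →λ s'. If two states s and t can simulate each other (there are simulations R with s R t and R' with t R' s constructed by the naive closure algorithm), and the closure algorithm terminates, then the relation R computed when checking that t simulates s is a bisimulation between s and t, and equals the inverse of the relation computed when checking that s simulates t. -/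
/-- The relation computed by the naive closure algorithm started from the pair
`(s, t)`: it contains `(s, t)` and is closed under matching transitions. -/
inductive Closure {S L : Type*} (step : S → L → S → Prop) (s t : S) :
    S → S → Prop
  | base : Closure step s t s t
  | next {u v u' v' : S} {lam : L} :
      Closure step s t u v → step u lam u' → step v lam v' →
      Closure step s t u' v'

/-- A relation `R` is a simulation if whenever `u R v` and `u` makes a
transition, `v` can match it and the results are again related. -/
def IsSimulation {S L : Type*} (step : S → L → S → Prop)
    (R : S → S → Prop) : Prop :=
  ∀ u v, R u v → ∀ (lam : L) u', step u lam u' → ∃ v', step v lam v' ∧ R u' v'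

/-- A bisimulation is a relation that is a simulation in both directions. -/
def IsBisimulation {S L : Type*} (step : S → L → S → Prop)
    (R : S → S → Prop) : Prop :=
  IsSimulation step R ∧ IsSimulation step (fun u v => R v u)

/-- In a deterministic LTS, if the naive closure algorithm succeeds in both
directions -- i.e. the closure from `(s, t)` is a simulation and the closure
from `(t, s)` is a simulation -- then the closure from `(s, t)` is a
bisimulation relating `s` and `t`, and it is the inverse of the closure from
`(t, s)`. -/
theorem closure_bisimulation {S L : Type*} (step : S → L → S → Prop)
    (hdet : ∀ (u : S) (lam : L) (u₁ u₂ : S),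
      step u lam u₁ → step u lam u₂ → u₁ = u₂)
    (s t : S)
    (hst : IsSimulation step (Closure step s t))
    (hts : IsSimulation step (Closure step t s)) :
    IsBisimulation step (Closure step s t) ∧ Closure step s t s t ∧
    (∀ u v, Closure step s t u v ↔ Closure step t s v u) := by
  have symm : ∀ (a b : S), ∀ u v, Closure step a b u v → Closure step b a v u := by
    intro a b u v h
    induction h with
    | base => exact Closure.base
    | next _ h1 h2 ih => exact Closure.next ih h2 h1
  refine ⟨⟨hst, ?_⟩, Closure.base, fun u v => ⟨symm s t u v, symm t s v u⟩⟩
  intro u v h lam u' hu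
  obtain ⟨v', hv', hc⟩ := hts u v (symm s t v u h) lam u' hu
  exact ⟨v', hv', symm t s u' v' hc⟩
end

section
/- Under the hypotheses of label-disjoint confluence (determinism per label, disjointness of distinct enabled labels, and commutation of independent labels), any two finite execution traces from the same state that are permutations of each other via adjacent swaps of name-disjoint labels lead to the same final state. -/
/-- Execution of a finite trace of labels. -/
inductive Exec {S L : Type*} (step : S → L → S → Prop) : S → List L → S → Prop
  | nil (s : S) : Exec step s [] s
  | cons {s s' t : S} {lam : L} {T : List L} :
      step s lam s' → Exec step s' T t → Exec step s (lam :: T) t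

/-- One adjacent transposition of two consecutive labels whose process-name
sets are disjoint. -/
def SwapStep {L P : Type*} [DecidableEq P] (pn : L → Finset P)
    (l l' : List L) : Prop :=
  ∃ (l₁ l₂ : List L) (a b : L), Disjoint (pn a) (pn b) ∧
    l = l₁ ++ a :: b :: l₂ ∧ l' = l₁ ++ b :: a :: l₂

section Aux

variable {S L P : Type*} [DecidableEq P]

theorem Exec.append {step : S → L → S → Prop} {s r t : S} {w w' : List L}
    (h1 : Exec step s w r) (h2 : Exec step r w' t) : Exec step s (w ++ w') t := by
  induction h1 with
  | nil => simpa
  | cons hs _ ih => exact Exec.cons hs (ih h2)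

theorem Exec.split {step : S → L → S → Prop} {s t : S} {w w' : List L}
    (h : Exec step s (w ++ w') t) : ∃ r, Exec step s w r ∧ Exec step r w' t := by
  induction w generalizing s with
  | nil => exact ⟨s, Exec.nil s, h⟩
  | cons x xs ih =>
    cases h with
    | cons hs hrest =>
      obtain ⟨r, h1, h2⟩ := ih hrest
      exact ⟨r, Exec.cons hs h1, h2⟩

/-- Pushing a step over an execution of name-disjoint labels. -/
theorem exec_push {step : S → L → S → Prop} {pn : L → Finset P}
    (hcomm : ∀ (s s₁ s₂ : S) (lam mu : L),
      step s lam s₁ → step s mu s₂ → Disjoint (pn lam) (pn mu) →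
      ∃ s₃, step s₁ mu s₃ ∧ step s₂ lam s₃)
    {s s₁ r : S} {a : L} {w : List L}
    (ha : step s a s₁) (hw : Exec step s w r)
    (hdisj : ∀ b ∈ w, Disjoint (pn a) (pn b)) :
    ∃ r₁, step r a r₁ ∧ Exec step s₁ w r₁ := by
  induction hw generalizing s₁ with
  | nil s => exact ⟨s₁, ha, Exec.nil _⟩
  | @cons u u' v b T hs hrest ih =>
    obtain ⟨s₃, h1, h2⟩ := hcomm _ _ _ _ _ ha hs (hdisj b (by simp))
    obtain ⟨r₁, hr, he⟩ := ih h2 (fun c hc => hdisj c (by simp [hc]))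
    exact ⟨r₁, hr, Exec.cons h1 he⟩

theorem swap_nil {pn : L → Finset P} {v : List L}
    (h : Relation.ReflTransGen (SwapStep pn) [] v) : v = [] := by
  induction h with
  | refl => rfl
  | tail _ hstep ih =>
    subst ih
    obtain ⟨l₁, l₂, x, y, _, heq, _⟩ := hstep
    exact absurd heq (by cases l₁ <;> simp)

/-- Extracting the head of a trace through a chain of swaps. -/
theorem swap_head {pn : L → Finset P} {a : L} {u v : List L}
    (h : Relation.ReflTransGen (SwapStep pn) (a :: u) v) :
    ∃ w w', v = w ++ a :: w' ∧ (∀ b ∈ w, Disjoint (pn a) (pn b)) ∧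
      Relation.ReflTransGen (SwapStep pn) u (w ++ w') := by
  induction h with
  | refl => exact ⟨[], u, rfl, by simp, Relation.ReflTransGen.refl⟩
  | tail _ hstep ih =>
    obtain ⟨w, w', rfl, hdisj, hequiv⟩ := ih
    obtain ⟨l₁, l₂, x, y, hxy, heq, rfl⟩ := hstep
    rcases List.append_eq_append_iff.mp heq with ⟨a', h1, h2⟩ | ⟨c', h1, h2⟩
    · -- l₁ = w ++ a', a :: w' = a' ++ x :: y :: l₂
      subst h1
      cases a' with
      | nil =>
        -- a = x, w' = y :: l₂
        simp only [List.nil_append, List.cons.injEq] at h2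
        obtain ⟨rfl, rfl⟩ := h2
        refine ⟨w ++ [y], l₂, by simp, ?_, ?_⟩
        · intro b hb
          rcases (by simpa using hb : b ∈ w ∨ b = y) with hb | rfl
          · exact hdisj b hb
          · exact hxy
        · simpa using hequiv
      | cons z t =>
        -- z = a, w' = t ++ x :: y :: l₂
        simp only [List.cons_append, List.cons.injEq] at h2
        obtain ⟨rfl, rfl⟩ := h2
        refine ⟨w, t ++ y :: x :: l₂, by simp, hdisj, ?_⟩
        refine hequiv.tail ⟨w ++ t, l₂, x, y, hxy, by simp, by simp⟩
    · -- w = l₁ ++ c', x :: y :: l₂ = c' ++ a :: w'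
      subst h1
      match c', h2 with
      | [], h2 =>
        -- x = a, y :: l₂ = w'
        simp only [List.nil_append, List.cons.injEq] at h2
        obtain ⟨rfl, rfl⟩ := h2
        refine ⟨(l₁ ++ []) ++ [y], l₂, by simp, ?_, ?_⟩
        · intro b hb
          rcases (by simpa using hb : b ∈ l₁ ∨ b = y) with hb | rfl
          · exact hdisj b (by simp [hb])
          · exact hxy
        · simpa using hequiv
      | [z], h2 =>
        -- z = x, a = y, w' = l₂
        simp only [List.cons_append, List.nil_append, List.cons.injEq] at h2
        obtain ⟨rfl, rfl, rfl⟩ := h2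
        refine ⟨l₁, x :: l₂, by simp, ?_, ?_⟩
        · intro b hb; exact hdisj b (by simp [hb])
        · simpa using hequiv
      | z :: z' :: c'', h2 =>
        -- z = x, z' = y, l₂ = c'' ++ a :: w'
        simp only [List.cons_append, List.cons.injEq] at h2
        obtain ⟨rfl, rfl, rfl⟩ := h2
        refine ⟨l₁ ++ y :: x :: c'', w', by simp, ?_, ?_⟩
        · intro b hb
          refine hdisj b ?_
          simp only [List.mem_append, List.mem_cons] at hb ⊢
          tauto
        · refine hequiv.tail ⟨l₁, c'' ++ w', x, y, hxy, by simp, by simp⟩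

end Aux

/-- Under per-label determinism and commutation of name-disjoint labels,
swap-equivalent traces from the same state lead to the same final state. -/
theorem swap_equivalent_traces_same_state {S L P : Type*} [DecidableEq P]
    (step : S → L → S → Prop) (pn : L → Finset P)
    (hdet : ∀ (s : S) (lam : L) (t t' : S),
      step s lam t → step s lam t' → t = t')
    (hcomm : ∀ (s s₁ s₂ : S) (lam mu : L),
      step s lam s₁ → step s mu s₂ → Disjoint (pn lam) (pn mu) →
      ∃ s₃, step s₁ mu s₃ ∧ step s₂ lam s₃)
    (s t₁ t₂ : S) (T₁ T₂ : List L)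
    (h₁ : Exec step s T₁ t₁) (h₂ : Exec step s T₂ t₂)
    (hswap : Relation.ReflTransGen (SwapStep pn) T₁ T₂) :
    t₁ = t₂ := by
  induction T₁ generalizing s t₁ t₂ T₂ with
  | nil =>
    have := swap_nil hswap
    subst this
    cases h₁; cases h₂; rfl
  | cons a u ih =>
    cases h₁ with
    | cons ha h₁' =>
      rename_i s₁
      obtain ⟨w, w', rfl, hdisj, hequiv⟩ := swap_head hswap
      obtain ⟨r, hw, hrest⟩ := Exec.split h₂
      cases hrest with
      | cons ha' hrest' =>
        rename_i r₁
        obtain ⟨r₁', hr', he⟩ := exec_push hcomm ha hw hdisj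
        have : r₁' = r₁ := hdet _ _ _ _ hr' ha'
        subst this
        exact ih s₁ t₁ t₂ (w ++ w') h₁' (he.append hrest') hequiv
end
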